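/- Let H be a Hilbert space, let T be a positive self-adjoint operator on H, and let V be a Hilbert space continuously and densely embedded in H with V contained in Dom(T²), such that T² extends to a bounded operator from V to H. Then Dom(T) contains the complex interpolation space [H, V]_{1/2} and T is bounded from [H, V]_{1/2} to H. -/

import Mathlib

open scoped InnerProductSpace ComplexConjugate
open Filter Topology

set_option maxHeartbeats 1000000
set_option synthInstance.maxHeartbeats 200000
set_option linter.unusedSectionVars false

namespace Egorov19

variable {H : Type*} [NormedAddCommGroup H] [InnerProductSpace ℂ H] [CompleteSpace H]

/-- Symmetry of a self-adjoint `LinearPMap`. -/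
theorem sa_symm {A : H →ₗ.[ℂ] H} (hA : IsSelfAdjoint A) (x y : A.domain) :
    ⟪(A x : H), (y : H)⟫_ℂ = ⟪(x : H), (A y : H)⟫_ℂ := by
  have hd := hA.dense_domain
  have h1 := LinearPMap.adjoint_isFormalAdjoint (T := A) hd
  rw [LinearPMap.isSelfAdjoint_def] at hA
  rw [hA] at h1
  exact h1 x y

/-- Membership criterion for the domain of a self-adjoint operator. -/
theorem sa_mem_of_forall {A : H →ₗ.[ℂ] H} (hA : IsSelfAdjoint A) {x y : H}
    (h : ∀ z : A.domain, ⟪(A z : H), x⟫_ℂ = ⟪(z : H), y⟫_ℂ) :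
    ∃ hx : x ∈ A.domain, A ⟨x, hx⟩ = y := by
  have hd := hA.dense_domain
  have hsa := hA
  rw [LinearPMap.isSelfAdjoint_def] at hsa
  have hx' : x ∈ A.adjoint.domain := by
    apply LinearPMap.mem_adjoint_domain_of_exists
    exact ⟨y, fun z => by
      have := h z
      calc ⟪y, (z : H)⟫_ℂ = conj ⟪(z : H), y⟫_ℂ := (inner_conj_symm _ _).symm
        _ = conj ⟪(A z : H), x⟫_ℂ := by rw [this]
        _ = ⟪x, (A z : H)⟫_ℂ := inner_conj_symm _ _⟩
  have hx : x ∈ A.domain := by rw [← hsa]; exact hx'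
  refine ⟨hx, ?_⟩
  apply hd.eq_of_inner_left (𝕜 := ℂ)
  intro z' hz
  obtain ⟨z, rfl⟩ : ∃ z : A.domain, (z : H) = z' := ⟨⟨z', hz⟩, rfl⟩
  calc ⟪(A ⟨x, hx⟩ : H), (z : H)⟫_ℂ = ⟪x, (A z : H)⟫_ℂ := sa_symm hA _ _
    _ = conj ⟪(A z : H), x⟫_ℂ := (inner_conj_symm _ _).symm
    _ = conj ⟪(z : H), y⟫_ℂ := by rw [h z]
    _ = ⟪y, (z : H)⟫_ℂ := inner_conj_symm _ _

/-- Sequential closedness of a self-adjoint operator. -/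
theorem sa_closed {A : H →ₗ.[ℂ] H} (hA : IsSelfAdjoint A) {x y : H} {u : ℕ → A.domain}
    (hu : Tendsto (fun n => (u n : H)) atTop (𝓝 x))
    (hAu : Tendsto (fun n => (A (u n) : H)) atTop (𝓝 y)) :
    ∃ hx : x ∈ A.domain, A ⟨x, hx⟩ = y := by
  apply sa_mem_of_forall hA
  intro z
  have h1 : Tendsto (fun n => ⟪(A z : H), (u n : H)⟫_ℂ) atTop (𝓝 ⟪(A z : H), x⟫_ℂ) :=
    (continuous_const.inner continuous_id).continuousAt.tendsto.comp hu
  have h2 : Tendsto (fun n => ⟪(z : H), (A (u n) : H)⟫_ℂ) atTop (𝓝 ⟪(z : H), y⟫_ℂ) :=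
    (continuous_const.inner continuous_id).continuousAt.tendsto.comp hAu
  have heq : ∀ n, ⟪(A z : H), (u n : H)⟫_ℂ = ⟪(z : H), (A (u n) : H)⟫_ℂ :=
    fun n => sa_symm hA z (u n)
  simp only [heq] at h1
  exact tendsto_nhds_unique h1 h2

/-- Surjectivity of `1 + A²` for a self-adjoint operator `A` (von Neumann). -/
theorem sa_surj {A : H →ₗ.[ℂ] H} (hA : IsSelfAdjoint A) (f : H) :
    ∃ (x : H) (h1 : x ∈ A.domain) (h2 : (A ⟨x, h1⟩ : H) ∈ A.domain),
      x + A ⟨A ⟨x, h1⟩, h2⟩ = f := by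
  classical
  let E := WithLp 2 (H × H)
  let G : Submodule ℂ E := A.graph.comap (WithLp.linearEquiv 2 ℂ (H × H)).toLinearMap
  have hGmem : ∀ p : E, p ∈ G ↔ ∃ hx : p.fst ∈ A.domain, (A ⟨p.fst, hx⟩ : H) = p.snd := by
    intro p
    rw [Submodule.mem_comap]
    rw [LinearPMap.mem_graph_iff]
    constructor
    · rintro ⟨y, hy1, hy2⟩
      have hy1' : (y : H) = p.fst := hy1
      have hy2' : (A y : H) = p.snd := hy2
      refine ⟨hy1' ▸ y.2, ?_⟩
      have heq : (⟨p.fst, hy1' ▸ y.2⟩ : A.domain) = y := Subtype.ext hy1'.symm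
      rw [heq, hy2']
    · rintro ⟨hx, hval⟩
      exact ⟨⟨p.fst, hx⟩, rfl, hval⟩
  have hGiff : ∀ p : E, p ∈ G ↔
      ∀ z : A.domain, ⟪(A z : H), p.fst⟫_ℂ = ⟪(z : H), p.snd⟫_ℂ := by
    intro p
    rw [hGmem]
    constructor
    · rintro ⟨hx, hval⟩ z
      rw [← hval]
      exact sa_symm hA z ⟨p.fst, hx⟩
    · intro h
      exact sa_mem_of_forall hA h
  have hfstc : Continuous fun p : E => p.fst :=
    continuous_fst.comp (WithLp.prod_continuous_ofLp 2 H H : Continuous _)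
  have hsndc : Continuous fun p : E => p.snd :=
    continuous_snd.comp (WithLp.prod_continuous_ofLp 2 H H : Continuous _)
  have hGclosed : IsClosed (G : Set E) := by
    have hset : (G : Set E) =
        ⋂ z : A.domain, {p : E | ⟪(A z : H), p.fst⟫_ℂ = ⟪(z : H), p.snd⟫_ℂ} := by
      ext p
      simp only [SetLike.mem_coe, hGiff, Set.mem_iInter, Set.mem_setOf_eq]
    rw [hset]
    exact isClosed_iInter fun z => isClosed_eq
      (Continuous.inner continuous_const hfstc) (Continuous.inner continuous_const hsndc)
  haveI : CompleteSpace G := hGclosed.completeSpace_coe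
  obtain ⟨a, haG, b, hb, hdecomp⟩ :=
    G.exists_add_mem_mem_orthogonal ((WithLp.equiv 2 (H × H)).symm (f, 0))
  obtain ⟨h1, hx2⟩ := (hGmem a).mp haG
  have hbf : b.fst = f - a.fst := by
    have h := congrArg (fun p : E => p.fst) hdecomp
    have h' : f = a.fst + b.fst := h
    rw [h']; abel
  have hbs : b.snd = -a.snd := by
    have h := congrArg (fun p : E => p.snd) hdecomp
    have h' : (0 : H) = a.snd + b.snd := h
    rw [eq_comm, add_eq_zero_iff_eq_neg] at h'
    rw [h', neg_neg]
  have horth : ∀ z : A.domain, ⟪(A z : H), a.snd⟫_ℂ = ⟪(z : H), f - a.fst⟫_ℂ := by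
    intro z
    have hzG : ((WithLp.equiv 2 (H × H)).symm ((z : H), (A z : H))) ∈ G := by
      rw [hGmem]
      exact ⟨z.2, by congr⟩
    have h0 := (Submodule.mem_orthogonal G b).mp hb _ hzG
    have h0' : ⟪(z : H), b.fst⟫_ℂ + ⟪(A z : H), b.snd⟫_ℂ = 0 := h0
    rw [hbf, hbs, inner_neg_right] at h0'
    linear_combination -h0'
  obtain ⟨h2, hval⟩ := sa_mem_of_forall hA horth
  have h2' : (A ⟨a.fst, h1⟩ : H) ∈ A.domain := by rw [hx2]; exact h2
  refine ⟨a.fst, h1, h2', ?_⟩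
  have : A ⟨(A ⟨a.fst, h1⟩ : H), h2'⟩ = A ⟨a.snd, h2⟩ := by
    congr 1
    exact Subtype.ext hx2
  rw [this, hval]
  abel


theorem pmap_sub (A : H →ₗ.[ℂ] H) {x y : H} (hx : x ∈ A.domain) (hy : y ∈ A.domain)
    (h : x - y ∈ A.domain) : A ⟨x - y, h⟩ = A ⟨x, hx⟩ - A ⟨y, hy⟩ := by
  have h1 : (⟨x - y, h⟩ : A.domain) = ⟨x, hx⟩ - ⟨y, hy⟩ := Subtype.ext rfl
  rw [h1, LinearPMap.map_sub]

theorem pmap_add (A : H →ₗ.[ℂ] H) {x y : H} (hx : x ∈ A.domain) (hy : y ∈ A.domain)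
    (h : x + y ∈ A.domain) : A ⟨x + y, h⟩ = A ⟨x, hx⟩ + A ⟨y, hy⟩ := by
  have h1 : (⟨x + y, h⟩ : A.domain) = ⟨x, hx⟩ + ⟨y, hy⟩ := Subtype.ext rfl
  rw [h1, LinearPMap.map_add]

theorem pmap_smul (A : H →ₗ.[ℂ] H) {x : H} (c : ℂ) (hx : x ∈ A.domain)
    (h : c • x ∈ A.domain) : A ⟨c • x, h⟩ = c • A ⟨x, hx⟩ := by
  have h1 : (⟨c • x, h⟩ : A.domain) = c • ⟨x, hx⟩ := Subtype.ext rfl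
  rw [h1, LinearPMap.map_smul]

/-- Graph-norm density of the "core" `range L1` in the domain of `A`. -/
theorem sa_graph_dense {A : H →ₗ.[ℂ] H} (hA : IsSelfAdjoint A)
    {W : Type*} [NormedAddCommGroup W] [InnerProductSpace ℂ W]
    (L1 L2 : W →ₗ[ℂ] H)
    (hmem : ∀ w, ∃ h : L1 w ∈ A.domain, A ⟨L1 w, h⟩ = L2 w)
    (hmem2 : ∀ w, L2 w ∈ A.domain)
    (hsurj2 : ∀ f : H, ∃ w, ∃ h2 : (L2 w) ∈ A.domain, L1 w + A ⟨L2 w, h2⟩ = f)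
    (u : H) (hu : u ∈ A.domain) :
    ∃ w : ℕ → W, Tendsto (fun n => L1 (w n)) atTop (𝓝 u) ∧
        Tendsto (fun n => L2 (w n)) atTop (𝓝 (A ⟨u, hu⟩)) := by
  classical
  let E := WithLp 2 (H × H)
  let e : (H × H) ≃ₗ[ℂ] E := (WithLp.linearEquiv 2 ℂ (H × H)).symm
  let L : W →ₗ[ℂ] E := e.toLinearMap.comp (L1.prod L2)
  let G2 : Submodule ℂ E := LinearMap.range L
  let K2 : Submodule ℂ E := G2.topologicalClosure
  haveI : CompleteSpace K2 := G2.isClosed_topologicalClosure.completeSpace_coe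
  obtain ⟨a, haK, b, hb, hdecomp⟩ :=
    K2.exists_add_mem_mem_orthogonal ((WithLp.equiv 2 (H × H)).symm (u, A ⟨u, hu⟩))
  -- a is a limit of a sequence from G2
  have haC : a ∈ closure (G2 : Set E) := by
    have : (K2 : Set E) = closure (G2 : Set E) := rfl
    rw [← this]; exact haK
  obtain ⟨x, hxG, hxlim⟩ := mem_closure_iff_seq_limit.mp haC
  have hW : ∀ n, ∃ w : W, L w = x n := fun n => hxG n
  choose w hw using hW
  have hfstc : Continuous fun p : E => p.fst :=
    continuous_fst.comp (WithLp.prod_continuous_ofLp 2 H H : Continuous _)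
  have hsndc : Continuous fun p : E => p.snd :=
    continuous_snd.comp (WithLp.prod_continuous_ofLp 2 H H : Continuous _)
  have hL1 : Tendsto (fun n => L1 (w n)) atTop (𝓝 a.fst) := by
    have := (hfstc.continuousAt (x := a)).tendsto.comp hxlim
    refine this.congr fun n => ?_
    rw [Function.comp_apply, ← hw n]; rfl
  have hL2 : Tendsto (fun n => L2 (w n)) atTop (𝓝 a.snd) := by
    have := (hsndc.continuousAt (x := a)).tendsto.comp hxlim
    refine this.congr fun n => ?_
    rw [Function.comp_apply, ← hw n]; rfl
  -- closedness: a.fst ∈ A.domain, A a.fst = a.snd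
  have hseq : ∀ n, ∃ h : L1 (w n) ∈ A.domain, A ⟨L1 (w n), h⟩ = L2 (w n) := fun n => hmem (w n)
  have hclosed := sa_closed hA (u := fun n => ⟨L1 (w n), (hseq n).choose⟩)
      (x := a.fst) (y := a.snd) (by simpa using hL1) (by
        refine hL2.congr fun n => ?_
        exact ((hseq n).choose_spec).symm)
  obtain ⟨hafst, hafstval⟩ := hclosed
  -- orthogonality: u - a.fst = 0
  have hd : u - a.fst ∈ A.domain := sub_mem hu hafst
  have hborth : ∀ v : W, ⟪L1 v, b.fst⟫_ℂ + ⟪L2 v, b.snd⟫_ℂ = 0 := by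
    intro v
    have hvG : L v ∈ K2 := G2.le_topologicalClosure (LinearMap.mem_range_self L v)
    have h0 := (Submodule.mem_orthogonal K2 b).mp hb _ hvG
    exact h0
  have hbf : b.fst = u - a.fst := by
    have h := congrArg (fun p : E => p.fst) hdecomp
    have h' : u = a.fst + b.fst := h
    rw [h']; abel
  have hbs : b.snd = (A ⟨u, hu⟩ : H) - a.snd := by
    have h := congrArg (fun p : E => p.snd) hdecomp
    have h' : (A ⟨u, hu⟩ : H) = a.snd + b.snd := h
    rw [h']; abel
  have hbs' : b.snd = (A ⟨u - a.fst, hd⟩ : H) := by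
    rw [pmap_sub A hu hafst hd, hbs, hafstval]
  have hzero : u - a.fst = 0 := by
    have key : ∀ f : H, ⟪f, u - a.fst⟫_ℂ = 0 := by
      intro f
      obtain ⟨v, h2, hv⟩ := hsurj2 f
      have horth := hborth v
      rw [hbf, hbs'] at horth
      have hsym : ⟪L2 v, (A ⟨u - a.fst, hd⟩ : H)⟫_ℂ = ⟪(A ⟨L2 v, h2⟩ : H), u - a.fst⟫_ℂ := by
        have := sa_symm hA ⟨L2 v, h2⟩ ⟨u - a.fst, hd⟩
        exact this.symm
      rw [hsym] at horth
      rw [← hv, inner_add_left]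
      exact horth
    have := key (u - a.fst)
    rwa [inner_self_eq_zero] at this
  have hfsteq : a.fst = u := by
    have := sub_eq_zero.mp hzero; exact this.symm
  refine ⟨w, ?_, ?_⟩
  · rwa [hfsteq] at hL1
  · rw [← hafstval] at hL2
    have : A ⟨a.fst, hafst⟩ = A ⟨u, hu⟩ := by congr 1; exact Subtype.ext hfsteq
    rwa [this] at hL2

theorem pmap_congr (A : H →ₗ.[ℂ] H) {x y : H} (h : x = y) (hx : x ∈ A.domain)
    (hy : y ∈ A.domain) : A ⟨x, hx⟩ = A ⟨y, hy⟩ := by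
  congr 1
  exact Subtype.ext h

theorem pmap_zero (A : H →ₗ.[ℂ] H) (h : (0:H) ∈ A.domain) : A ⟨0, h⟩ = 0 := by
  have h1 : (⟨(0:H), h⟩ : A.domain) = 0 := Subtype.ext rfl
  rw [h1, LinearPMap.map_zero]

variable {V : Type*} [NormedAddCommGroup V] [InnerProductSpace ℂ V]

/-- The abstract iteration ("baby Heinz inequality") step. -/
theorem core_bound (ι : V →L[ℂ] H) (hinj : Function.Injective ι)
    (ρ : H → V) (S1 S2 T1 T2 : V → H)
    (hρ : ∀ f, ι (ρ f) + S2 (ρ f) = f)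
    (hsym1 : ∀ v w, ⟪S2 v, ι w⟫_ℂ = ⟪S1 v, S1 w⟫_ℂ)
    (hsym1' : ∀ v w, ⟪ι v, S2 w⟫_ℂ = ⟪S1 v, S1 w⟫_ℂ)
    (hsymT : ∀ v w, ⟪T2 v, ι w⟫_ℂ = ⟪T1 v, T1 w⟫_ℂ)
    (hT10 : T1 0 = 0)
    (D : ℝ) (hD1 : 1 ≤ D)
    (hKb : ∀ f, ‖T2 (ρ f)‖ ≤ D * ‖f‖) :
    ∀ f, ‖T1 (ρ f)‖ ^ 2 ≤ D * (‖ι (ρ f)‖ ^ 2 + ‖S1 (ρ f)‖ ^ 2) := by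
  classical
  let R : H → H := fun f => ι (ρ f)
  let K : H → H := fun f => T2 (ρ f)
  let M : H → H := fun f => T1 (ρ f)
  let P : H → ℝ := fun f => ‖R f‖ ^ 2 + ‖S1 (ρ f)‖ ^ 2
  have hR : ∀ f, R f = ι (ρ f) := fun _ => rfl
  have hK : ∀ f, K f = T2 (ρ f) := fun _ => rfl
  have hM : ∀ f, M f = T1 (ρ f) := fun _ => rfl
  have hP : ∀ f, P f = ‖R f‖ ^ 2 + ‖S1 (ρ f)‖ ^ 2 := fun _ => rfl
  have hPnonneg : ∀ f, 0 ≤ P f := fun f => by rw [hP]; positivity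
  -- the sesquilinear form ⟪R f, g⟫
  have hπ : ∀ f g, ⟪R f, g⟫_ℂ = ⟪R f, R g⟫_ℂ + ⟪S1 (ρ f), S1 (ρ g)⟫_ℂ := by
    intro f g
    conv_lhs => rw [← hρ g]
    rw [inner_add_right, hsym1' (ρ f) (ρ g)]
  have hPC : ∀ f, ⟪R f, f⟫_ℂ = ((P f : ℝ) : ℂ) := by
    intro f
    rw [hπ, inner_self_eq_norm_sq_to_K, inner_self_eq_norm_sq_to_K, hP]
    norm_cast
  have hRsymm : ∀ f g, ⟪R f, g⟫_ℂ = ⟪f, R g⟫_ℂ := by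
    intro f g
    rw [← inner_conj_symm f (R g), hπ g f, map_add, inner_conj_symm, inner_conj_symm, hπ f g]
  -- Cauchy-Schwarz for the form
  have hCS : ∀ f g, ‖⟪R f, g⟫_ℂ‖ ≤ Real.sqrt (P f) * Real.sqrt (P g) := by
    intro f g
    rw [hπ]
    have h1 : ‖⟪R f, R g⟫_ℂ + ⟪S1 (ρ f), S1 (ρ g)⟫_ℂ‖ ≤
        ‖R f‖ * ‖R g‖ + ‖S1 (ρ f)‖ * ‖S1 (ρ g)‖ :=
      le_trans (norm_add_le _ _) (add_le_add (norm_inner_le_norm _ _) (norm_inner_le_norm _ _))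
    refine le_trans h1 ?_
    rw [← Real.sqrt_mul (hPnonneg f)]
    rw [show Real.sqrt (P f * P g) = Real.sqrt (P f * P g) from rfl]
    have h2 : (‖R f‖ * ‖R g‖ + ‖S1 (ρ f)‖ * ‖S1 (ρ g)‖) ^ 2 ≤ P f * P g := by
      rw [hP, hP]
      nlinarith [sq_nonneg (‖R f‖ * ‖S1 (ρ g)‖ - ‖S1 (ρ f)‖ * ‖R g‖),
        norm_nonneg (R f), norm_nonneg (R g), norm_nonneg (S1 (ρ f)), norm_nonneg (S1 (ρ g))]
    have h3 : 0 ≤ ‖R f‖ * ‖R g‖ + ‖S1 (ρ f)‖ * ‖S1 (ρ g)‖ := by positivity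
    nlinarith [Real.sq_sqrt (mul_nonneg (hPnonneg f) (hPnonneg g)),
      Real.sqrt_nonneg (P f * P g)]
  -- moving K across the form
  have hKM : ∀ f g, ⟪R (K f), g⟫_ℂ = ⟪M f, M g⟫_ℂ := by
    intro f g
    calc ⟪R (K f), g⟫_ℂ = ⟪K f, R g⟫_ℂ := hRsymm (K f) g
      _ = ⟪T2 (ρ f), ι (ρ g)⟫_ℂ := rfl
      _ = ⟪T1 (ρ f), T1 (ρ g)⟫_ℂ := hsymT (ρ f) (ρ g)
      _ = ⟪M f, M g⟫_ℂ := rfl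
  have hmove : ∀ f g, ⟪R (K f), g⟫_ℂ = ⟪R f, K g⟫_ℂ := by
    intro f g
    calc ⟪R (K f), g⟫_ℂ = ⟪M f, M g⟫_ℂ := hKM f g
      _ = conj ⟪M g, M f⟫_ℂ := (inner_conj_symm _ _).symm
      _ = conj ⟪R (K g), f⟫_ℂ := by rw [hKM g f]
      _ = conj ⟪K g, R f⟫_ℂ := by rw [hRsymm (K g) f]
      _ = ⟪R f, K g⟫_ℂ := inner_conj_symm _ _
  have hmoven : ∀ (n : ℕ) f g, ⟪R (K^[n] f), g⟫_ℂ = ⟪R f, K^[n] g⟫_ℂ := by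
    intro n
    induction n with
    | zero => intro f g; simp
    | succ n ih =>
      intro f g
      rw [Function.iterate_succ_apply, Function.iterate_succ_apply' K n g, ih (K f) g]
      exact hmove f (K^[n] g)
  have hRle : ∀ f, ‖R f‖ ≤ ‖f‖ := by
    intro f
    have h1 : ‖R f‖ ^ 2 ≤ P f := by rw [hP]; nlinarith [sq_nonneg ‖S1 (ρ f)‖]
    have h2 : P f ≤ ‖R f‖ * ‖f‖ := by
      have h3 : P f = (⟪R f, f⟫_ℂ).re := by rw [hPC]; simp
      rw [h3]
      refine le_trans (Complex.re_le_norm _) ?_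
      exact norm_inner_le_norm _ _
    by_cases h0 : ‖R f‖ = 0
    · rw [h0]; exact norm_nonneg f
    · have hpos : 0 < ‖R f‖ := lt_of_le_of_ne (norm_nonneg _) (Ne.symm h0)
      nlinarith
  have hPle : ∀ f, P f ≤ ‖f‖ ^ 2 := by
    intro f
    have h3 : P f = (⟪R f, f⟫_ℂ).re := by rw [hPC]; simp
    rw [h3]
    refine le_trans (Complex.re_le_norm _) ?_
    refine le_trans (norm_inner_le_norm _ _) ?_
    calc ‖R f‖ * ‖f‖ ≤ ‖f‖ * ‖f‖ := mul_le_mul_of_nonneg_right (hRle f) (norm_nonneg f)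
      _ = ‖f‖ ^ 2 := by ring
  have hD0 : (0:ℝ) < D := lt_of_lt_of_le one_pos hD1
  have hKnle : ∀ (n : ℕ) f, ‖K^[n] f‖ ≤ D ^ n * ‖f‖ := by
    intro n
    induction n with
    | zero => intro f; simp
    | succ n ih =>
      intro f
      rw [Function.iterate_succ_apply]
      refine le_trans (ih (K f)) ?_
      have := hKb f
      have hDn : (0:ℝ) ≤ D ^ n := le_of_lt (pow_pos hD0 n)
      calc D ^ n * ‖K f‖ ≤ D ^ n * (D * ‖f‖) :=
            mul_le_mul_of_nonneg_left (hKb f) hDn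
        _ = D ^ (n + 1) * ‖f‖ := by ring
  -- the main iteration
  have hmain : ∀ f, ‖M f‖ ^ 2 ≤ D * P f := by
    intro f
    by_cases hc : P f = 0
    · have hRf : R f = 0 := by
        have h1 : ‖R f‖ ^ 2 ≤ P f := by rw [hP]; nlinarith [sq_nonneg ‖S1 (ρ f)‖]
        rw [hc] at h1
        have : ‖R f‖ = 0 := by nlinarith [norm_nonneg (R f)]
        exact norm_eq_zero.mp this
      have hρ0 : ρ f = 0 := by
        apply hinj
        rw [map_zero]
        exact hRf
      have hMf : M f = 0 := by rw [hM, hρ0, hT10]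
      rw [hMf, hc]
      simp
    · have hPpos : 0 < P f := lt_of_le_of_ne (hPnonneg f) (Ne.symm hc)
      have hf0 : 0 < ‖f‖ ^ 2 := lt_of_lt_of_le hPpos (hPle f)
      set u : ℕ → ℝ := fun n => (⟪R (K^[2 ^ n] f), f⟫_ℂ).re with hu
      have hu1 : ∀ n, u (n + 1) = P (K^[2 ^ n] f) := by
        intro n
        rw [hu]
        simp only []
        have h2 : (2:ℕ) ^ (n + 1) = 2 ^ n + 2 ^ n := by ring
        rw [h2, Function.iterate_add_apply, hmoven (2 ^ n) (K^[2 ^ n] f) f, hPC]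
        simp
      have hu0 : u 0 = ‖M f‖ ^ 2 := by
        rw [hu]
        simp only [pow_zero, Function.iterate_one]
        rw [hKM f f, inner_self_eq_norm_sq_to_K]
        norm_cast
      have hupos : ∀ n, 0 ≤ u n := by
        intro n
        cases n with
        | zero => rw [hu0]; positivity
        | succ n => rw [hu1 n]; exact hPnonneg _
      have hstep : ∀ n, u n ≤ Real.sqrt (u (n + 1)) * Real.sqrt (P f) := by
        intro n
        have h1 : u n ≤ ‖⟪R (K^[2 ^ n] f), f⟫_ℂ‖ := by
          rw [hu]
          refine le_trans (Complex.re_le_norm _) ?_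
          exact le_rfl
        have h2 := hCS (K^[2 ^ n] f) f
        rw [← hu1 n] at h2
        exact le_trans h1 h2
      have hubound : ∀ n, u n ≤ D ^ (2 ^ n) * ‖f‖ ^ 2 := by
        intro n
        have h1 : u n ≤ ‖⟪R (K^[2 ^ n] f), f⟫_ℂ‖ := by
          rw [hu]
          refine le_trans (Complex.re_le_norm _) ?_
          exact le_rfl
        refine le_trans h1 ?_
        refine le_trans (norm_inner_le_norm _ _) ?_
        have h3 : ‖R (K^[2 ^ n] f)‖ ≤ D ^ (2 ^ n) * ‖f‖ :=
          le_trans (hRle _) (hKnle (2 ^ n) f)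
        calc ‖R (K^[2 ^ n] f)‖ * ‖f‖ ≤ (D ^ (2 ^ n) * ‖f‖) * ‖f‖ :=
              mul_le_mul_of_nonneg_right h3 (norm_nonneg f)
          _ = D ^ (2 ^ n) * ‖f‖ ^ 2 := by ring
      -- the interpolation induction
      set e : ℕ → ℝ := fun n => (1 / 2 : ℝ) ^ n with he
      have heq : ∀ n, e n = (1 / 2 : ℝ) ^ n := fun n => rfl
      have hesucc : ∀ n, e (n + 1) = (1 / 2 : ℝ) * e n := by
        intro n; rw [heq, heq, pow_succ]; ring
      have he0 : ∀ n, (0:ℝ) < e n := fun n => by rw [heq]; positivity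
      have hind : ∀ n, u 0 ≤ (u n) ^ (e n) * (P f) ^ (1 - e n) := by
        intro n
        induction n with
        | zero =>
          rw [show e 0 = 1 by rw [heq]; norm_num]
          rw [Real.rpow_one, sub_self, Real.rpow_zero, mul_one]
        | succ n ih =>
          have h1 : u n ≤ (u (n + 1)) ^ (1 / 2 : ℝ) * (P f) ^ (1 / 2 : ℝ) := by
            rw [← Real.sqrt_eq_rpow, ← Real.sqrt_eq_rpow]
            exact hstep n
          have h2 : (u n) ^ (e n) ≤ ((u (n + 1)) ^ (1 / 2 : ℝ) * (P f) ^ (1 / 2 : ℝ)) ^ (e n) :=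
            Real.rpow_le_rpow (hupos n) h1 (le_of_lt (he0 n))
          have h3 : ((u (n + 1)) ^ (1 / 2 : ℝ) * (P f) ^ (1 / 2 : ℝ)) ^ (e n)
              = (u (n + 1)) ^ (e (n + 1)) * (P f) ^ ((1 / 2 : ℝ) * e n) := by
            rw [Real.mul_rpow (Real.rpow_nonneg (hupos (n + 1)) _)
              (Real.rpow_nonneg (hPnonneg f) _)]
            rw [← Real.rpow_mul (hupos (n + 1)), ← Real.rpow_mul (hPnonneg f)]
            rw [hesucc]
          have h4 : (P f) ^ ((1 / 2 : ℝ) * e n) * (P f) ^ (1 - e n)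
              = (P f) ^ (1 - e (n + 1)) := by
            rw [← Real.rpow_add hPpos]
            congr 1
            rw [hesucc]
            ring_nf
          calc u 0 ≤ (u n) ^ (e n) * (P f) ^ (1 - e n) := ih
            _ ≤ ((u (n + 1)) ^ (1 / 2 : ℝ) * (P f) ^ (1 / 2 : ℝ)) ^ (e n) * (P f) ^ (1 - e n) :=
                mul_le_mul_of_nonneg_right h2 (Real.rpow_nonneg (hPnonneg f) _)
            _ = (u (n + 1)) ^ (e (n + 1)) * (P f) ^ ((1 / 2 : ℝ) * e n) * (P f) ^ (1 - e n) := by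
                rw [h3]
            _ = (u (n + 1)) ^ (e (n + 1)) * (P f) ^ (1 - e (n + 1)) := by
                rw [mul_assoc, h4]
      -- bound the right-hand side
      have hφ : ∀ n, u 0 ≤ D * (‖f‖ ^ 2) ^ (e n) * (P f) ^ (1 - e n) := by
        intro n
        refine le_trans (hind n) ?_
        refine mul_le_mul_of_nonneg_right ?_ (Real.rpow_nonneg (hPnonneg f) _)
        have h1 : (u n) ^ (e n) ≤ (D ^ (2 ^ n) * ‖f‖ ^ 2) ^ (e n) :=
          Real.rpow_le_rpow (hupos n) (hubound n) (le_of_lt (he0 n))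
        refine le_trans h1 ?_
        rw [Real.mul_rpow (le_of_lt (pow_pos hD0 _)) (le_of_lt hf0)]
        have h2 : (D ^ (2 ^ n : ℕ) : ℝ) ^ (e n) = D := by
          rw [← Real.rpow_natCast D (2 ^ n), ← Real.rpow_mul (le_of_lt hD0)]
          have h3 : ((2 ^ n : ℕ) : ℝ) * e n = 1 := by
            rw [heq]
            push_cast
            rw [← mul_pow]
            norm_num
          rw [h3, Real.rpow_one]
        rw [h2]
      -- take the limit
      have hlim : Tendsto (fun n => D * (‖f‖ ^ 2) ^ (e n) * (P f) ^ (1 - e n)) atTop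
          (𝓝 (D * (‖f‖ ^ 2) ^ (0:ℝ) * (P f) ^ ((1:ℝ) - 0))) := by
        have hetend : Tendsto e atTop (𝓝 0) := by
          have : e = fun n => (1 / 2 : ℝ) ^ n := funext heq
          rw [this]
          exact tendsto_pow_atTop_nhds_zero_of_lt_one (by norm_num) (by norm_num)
        have t1 : Tendsto (fun n => (‖f‖ ^ 2) ^ (e n)) atTop (𝓝 ((‖f‖ ^ 2) ^ (0:ℝ))) :=
          ((Real.continuousAt_const_rpow (ne_of_gt hf0)).tendsto).comp hetend
        have t2 : Tendsto (fun n => (P f) ^ (1 - e n)) atTop (𝓝 ((P f) ^ ((1:ℝ) - 0))) := by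
          have : Tendsto (fun n => 1 - e n) atTop (𝓝 ((1:ℝ) - 0)) :=
            (tendsto_const_nhds.sub hetend)
          exact ((Real.continuousAt_const_rpow (ne_of_gt hPpos)).tendsto).comp this
        exact (tendsto_const_nhds.mul t1).mul t2
      have hfinal : u 0 ≤ D * (‖f‖ ^ 2) ^ (0:ℝ) * (P f) ^ ((1:ℝ) - 0) :=
        ge_of_tendsto hlim (Filter.Eventually.of_forall hφ)
      rw [Real.rpow_zero, sub_zero, Real.rpow_one, mul_one] at hfinal
      rw [← hu0]
      exact hfinal
  intro f
  have := hmain f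
  rw [hM, hP, hR] at this
  exact this


end Egorov19



/-- abstract interpolation core: Let `T` be a positive self-adjoint
operator on a complex Hilbert space `H`, and let `V` be a Hilbert space continuously,
injectively and densely embedded in `H` (via `ι`) with `V ⊆ Dom(T²)` and
`‖T²(ι v)‖ ≤ C ‖v‖_V`.  Realize the interpolation space `[H, V]_{1/2}` as the domain of
the positive self-adjoint operator `S` which is the square root of the positive operator
associated with `V` (i.e. `Dom(S²) = range ι` with equivalent graph norm, so that
`Dom(S)` with the graph norm `‖u‖ + ‖Su‖` is `[H, V]_{1/2}`).  Then
`[H, V]_{1/2} = Dom(S) ⊆ Dom(T)` and `T` is bounded from `[H, V]_{1/2}` to `H`: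
`‖Tu‖ ≤ C' (‖u‖ + ‖Su‖)`. -/
theorem egorov_stmt19 {H : Type*} [NormedAddCommGroup H] [InnerProductSpace ℂ H]
    [CompleteSpace H]
    {V : Type*} [NormedAddCommGroup V] [InnerProductSpace ℂ V] [CompleteSpace V]
    (T S : H →ₗ.[ℂ] H)
    (hT : IsSelfAdjoint T)
    (hTnonneg : ∀ x : T.domain, 0 ≤ (inner ℂ (T x) (x : H) : ℂ).re)
    (hS : IsSelfAdjoint S)
    (hSnonneg : ∀ x : S.domain, 0 ≤ (inner ℂ (S x) (x : H) : ℂ).re)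
    (ι : V →L[ℂ] H) (hinj : Function.Injective ι) (hdense : DenseRange ι)
    -- `V ⊆ Dom(T²)` and `T²` is bounded from `V` to `H`:
    (hVT2 : ∀ v : V, ∃ h1 : ι v ∈ T.domain, T ⟨ι v, h1⟩ ∈ T.domain)
    (CT : ℝ)
    (hTbound : ∀ (v : V) (h1 : ι v ∈ T.domain) (h2 : T ⟨ι v, h1⟩ ∈ T.domain),
      ‖T ⟨T ⟨ι v, h1⟩, h2⟩‖ ≤ CT * ‖v‖)
    -- `S` is the square root of the positive operator associated to (the form of) `V`:
    -- `Dom(S²) = range ι`, with graph norm equivalent to the norm of `V`.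
    (hSV : ∀ v : V, ∃ h1 : ι v ∈ S.domain, S ⟨ι v, h1⟩ ∈ S.domain)
    (hSdom : ∀ (x : H) (hx : x ∈ S.domain), S ⟨x, hx⟩ ∈ S.domain → x ∈ Set.range ι)
    (cS CS : ℝ) (hcS : 0 < cS)
    (hSnorm : ∀ (v : V) (h1 : ι v ∈ S.domain) (h2 : S ⟨ι v, h1⟩ ∈ S.domain),
      cS * ‖v‖ ≤ ‖ι v‖ + ‖S ⟨S ⟨ι v, h1⟩, h2⟩‖ ∧
      ‖ι v‖ + ‖S ⟨S ⟨ι v, h1⟩, h2⟩‖ ≤ CS * ‖v‖) :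
    ∃ C' : ℝ, ∀ (u : H) (hu : u ∈ S.domain),
      ∃ hu' : u ∈ T.domain, ‖T ⟨u, hu'⟩‖ ≤ C' * (‖u‖ + ‖S ⟨u, hu⟩‖) := by
  classical
  have sS : ∀ x y : S.domain, ⟪(S x : H), (y : H)⟫_ℂ = ⟪(x : H), (S y : H)⟫_ℂ :=
    Egorov19.sa_symm hS
  have sT : ∀ x y : T.domain, ⟪(T x : H), (y : H)⟫_ℂ = ⟪(x : H), (T y : H)⟫_ℂ :=
    Egorov19.sa_symm hT
  -- canonical pieces
  have hS1 : ∀ v : V, ι v ∈ S.domain := fun v => (hSV v).choose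
  let S1 : V → H := fun v => S ⟨ι v, hS1 v⟩
  have hS2 : ∀ v : V, S1 v ∈ S.domain := fun v => (hSV v).choose_spec
  let S2 : V → H := fun v => S ⟨S1 v, hS2 v⟩
  have hT1 : ∀ v : V, ι v ∈ T.domain := fun v => (hVT2 v).choose
  let T1 : V → H := fun v => T ⟨ι v, hT1 v⟩
  have hT2 : ∀ v : V, T1 v ∈ T.domain := fun v => (hVT2 v).choose_spec
  let T2 : V → H := fun v => T ⟨T1 v, hT2 v⟩
  have hTb : ∀ v, ‖T2 v‖ ≤ CT * ‖v‖ := fun v => hTbound v (hT1 v) (hT2 v)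
  have hSb1 : ∀ v, cS * ‖v‖ ≤ ‖ι v‖ + ‖S2 v‖ := fun v => (hSnorm v (hS1 v) (hS2 v)).1
  -- symmetry identities
  have hsym1 : ∀ v w : V, ⟪S2 v, ι w⟫_ℂ = ⟪S1 v, S1 w⟫_ℂ :=
    fun v w => sS ⟨S1 v, hS2 v⟩ ⟨ι w, hS1 w⟩
  have hsym1' : ∀ v w : V, ⟪ι v, S2 w⟫_ℂ = ⟪S1 v, S1 w⟫_ℂ :=
    fun v w => (sS ⟨ι v, hS1 v⟩ ⟨S1 w, hS2 w⟩).symm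
  have hsymT : ∀ v w : V, ⟪T2 v, ι w⟫_ℂ = ⟪T1 v, T1 w⟫_ℂ :=
    fun v w => sT ⟨T1 v, hT2 v⟩ ⟨ι w, hT1 w⟩
  -- linearity of the pieces
  have hS1add : ∀ a b : V, S1 (a + b) = S1 a + S1 b := by
    intro a b
    show S ⟨ι (a + b), hS1 _⟩ = S ⟨ι a, hS1 a⟩ + S ⟨ι b, hS1 b⟩
    rw [Egorov19.pmap_congr S (map_add ι a b) (hS1 _) (add_mem (hS1 a) (hS1 b))]
    exact Egorov19.pmap_add S (hS1 a) (hS1 b) _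
  have hS1smul : ∀ (c : ℂ) (a : V), S1 (c • a) = c • S1 a := by
    intro c a
    show S ⟨ι (c • a), hS1 _⟩ = c • S ⟨ι a, hS1 a⟩
    rw [Egorov19.pmap_congr S (map_smul ι c a) (hS1 _) (S.domain.smul_mem c (hS1 a))]
    exact Egorov19.pmap_smul S c (hS1 a) _
  have hS1sub : ∀ a b : V, S1 (a - b) = S1 a - S1 b := by
    intro a b
    show S ⟨ι (a - b), hS1 _⟩ = S ⟨ι a, hS1 a⟩ - S ⟨ι b, hS1 b⟩
    rw [Egorov19.pmap_congr S (map_sub ι a b) (hS1 _) (sub_mem (hS1 a) (hS1 b))]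
    exact Egorov19.pmap_sub S (hS1 a) (hS1 b) _
  have hS1zero : S1 0 = 0 := by
    show S ⟨ι 0, hS1 _⟩ = 0
    rw [Egorov19.pmap_congr S (map_zero ι) (hS1 _) (zero_mem _)]
    exact Egorov19.pmap_zero S _
  have hS2sub : ∀ a b : V, S2 (a - b) = S2 a - S2 b := by
    intro a b
    show S ⟨S1 (a - b), hS2 _⟩ = S ⟨S1 a, hS2 a⟩ - S ⟨S1 b, hS2 b⟩
    rw [Egorov19.pmap_congr S (hS1sub a b) (hS2 _)
      (sub_mem (hS2 a) (hS2 b))]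
    exact Egorov19.pmap_sub S (hS2 a) (hS2 b) _
  have hT1sub : ∀ a b : V, T1 (a - b) = T1 a - T1 b := by
    intro a b
    show T ⟨ι (a - b), hT1 _⟩ = T ⟨ι a, hT1 a⟩ - T ⟨ι b, hT1 b⟩
    rw [Egorov19.pmap_congr T (map_sub ι a b) (hT1 _) (sub_mem (hT1 a) (hT1 b))]
    exact Egorov19.pmap_sub T (hT1 a) (hT1 b) _
  have hT1zero : T1 0 = 0 := by
    show T ⟨ι 0, hT1 _⟩ = 0
    rw [Egorov19.pmap_congr T (map_zero ι) (hT1 _) (zero_mem _)]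
    exact Egorov19.pmap_zero T _
  -- surjectivity of 1 + S² through the range of ι
  have hsurj : ∀ f : H, ∃ v : V, ι v + S2 v = f := by
    intro f
    obtain ⟨x, h1, h2, hx⟩ := Egorov19.sa_surj hS f
    obtain ⟨v, hv⟩ := hSdom x h1 h2
    refine ⟨v, ?_⟩
    have e1 : S1 v = S ⟨x, h1⟩ := Egorov19.pmap_congr S hv (hS1 v) h1
    have e2 : S2 v = S ⟨S ⟨x, h1⟩, h2⟩ := by
      show S ⟨S1 v, hS2 v⟩ = S ⟨S ⟨x, h1⟩, h2⟩
      exact Egorov19.pmap_congr S e1 (hS2 v) h2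
    rw [hv, e2]
    exact hx
  let ρ : H → V := fun f => (hsurj f).choose
  have hρ : ∀ f, ι (ρ f) + S2 (ρ f) = f := fun f => (hsurj f).choose_spec
  -- uniqueness
  have huniq : ∀ v : V, ρ (ι v + S2 v) = v := by
    intro v
    set f := ι v + S2 v with hf
    have h1 : ι (ρ f) + S2 (ρ f) = ι v + S2 v := hρ f
    set d := ρ f - v with hd
    have h2 : ι d + S2 d = 0 := by
      rw [hd, map_sub, hS2sub]
      rw [show (ι (ρ f) - ι v) + (S2 (ρ f) - S2 v) = (ι (ρ f) + S2 (ρ f)) - (ι v + S2 v) by abel]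
      rw [h1, sub_self]
    have h3 : ⟪ι d + S2 d, ι d⟫_ℂ = 0 := by rw [h2, inner_zero_left]
    rw [inner_add_left, hsym1 d d, inner_self_eq_norm_sq_to_K,
      inner_self_eq_norm_sq_to_K] at h3
    have h4 : ‖ι d‖ ^ 2 + ‖S1 d‖ ^ 2 = 0 := by
      have := congrArg Complex.re h3
      simpa [← Complex.ofReal_pow] using this
    have h5 : ι d = 0 := by
      refine norm_eq_zero.mp ?_
      nlinarith [norm_nonneg (ι d), norm_nonneg (S1 d), sq_nonneg ‖ι d‖, sq_nonneg ‖S1 d‖]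
    have h6 : d = 0 := hinj (by rw [h5, map_zero])
    have h7 : ρ f - v = 0 := by rw [← hd]; exact h6
    have := sub_eq_zero.mp h7
    exact this
  -- the key bound on the range of ι, via the abstract iteration
  have hCT' : (0:ℝ) ≤ max CT 0 := le_max_right CT 0
  set D : ℝ := max (2 * (max CT 0) / cS) 1 with hD
  have hD1 : (1:ℝ) ≤ D := le_max_right _ 1
  have hD0 : (0:ℝ) < D := lt_of_lt_of_le one_pos hD1
  -- ‖ι v‖, ‖S2 v‖ ≤ ‖ι v + S2 v‖
  have hcomp : ∀ v : V, ‖ι v‖ ≤ ‖ι v + S2 v‖ ∧ ‖S2 v‖ ≤ ‖ι v + S2 v‖ := by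
    intro v
    have h1 : ‖ι v + S2 v‖ ^ 2 = ‖ι v‖ ^ 2 + 2 * ‖S1 v‖ ^ 2 + ‖S2 v‖ ^ 2 := by
      rw [norm_add_sq (𝕜 := ℂ), hsym1' v v, inner_self_eq_norm_sq_to_K]
      norm_cast
    constructor
    · nlinarith [norm_nonneg (ι v), norm_nonneg (S2 v), norm_nonneg (S1 v),
        norm_nonneg (ι v + S2 v), sq_nonneg ‖S1 v‖]
    · nlinarith [norm_nonneg (ι v), norm_nonneg (S2 v), norm_nonneg (S1 v),
        norm_nonneg (ι v + S2 v), sq_nonneg ‖S1 v‖]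
  have hKb : ∀ f, ‖T2 (ρ f)‖ ≤ D * ‖f‖ := by
    intro f
    have h1 : ‖T2 (ρ f)‖ ≤ CT * ‖ρ f‖ := hTb (ρ f)
    have h2 : CT * ‖ρ f‖ ≤ (max CT 0) * ‖ρ f‖ :=
      mul_le_mul_of_nonneg_right (le_max_left CT 0) (norm_nonneg _)
    have h3 : cS * ‖ρ f‖ ≤ ‖ι (ρ f)‖ + ‖S2 (ρ f)‖ := hSb1 (ρ f)
    have h4 : ‖ι (ρ f)‖ + ‖S2 (ρ f)‖ ≤ 2 * ‖f‖ := by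
      have := hcomp (ρ f)
      rw [hρ f] at this
      linarith [this.1, this.2]
    have h5 : ‖ρ f‖ ≤ 2 * ‖f‖ / cS := by
      rw [le_div_iff₀ hcS]
      nlinarith
    calc ‖T2 (ρ f)‖ ≤ (max CT 0) * ‖ρ f‖ := le_trans h1 h2
      _ ≤ (max CT 0) * (2 * ‖f‖ / cS) := mul_le_mul_of_nonneg_left h5 hCT'
      _ = (2 * (max CT 0) / cS) * ‖f‖ := by ring
      _ ≤ D * ‖f‖ := mul_le_mul_of_nonneg_right (le_max_left _ 1) (norm_nonneg f)
  have hcore := Egorov19.core_bound ι hinj ρ S1 S2 T1 T2 hρ hsym1 hsym1' hsymT hT1zero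
    D hD1 hKb
  have hrng : ∀ v : V, ‖T1 v‖ ^ 2 ≤ D * (‖ι v‖ ^ 2 + ‖S1 v‖ ^ 2) := by
    intro v
    have h := hcore (ι v + S2 v)
    rw [huniq v] at h
    exact h
  -- pointwise bound with square roots
  have hsqrtD : Real.sqrt D ^ 2 = D := Real.sq_sqrt (le_of_lt hD0)
  have hsqrtD0 : 0 ≤ Real.sqrt D := Real.sqrt_nonneg D
  have hrng' : ∀ v : V, ‖T1 v‖ ≤ Real.sqrt D * (‖ι v‖ + ‖S1 v‖) := by
    intro v
    have h := hrng v
    nlinarith [norm_nonneg (T1 v), norm_nonneg (ι v), norm_nonneg (S1 v),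
      mul_nonneg (norm_nonneg (ι v)) (norm_nonneg (S1 v)),
      mul_nonneg hsqrtD0 (add_nonneg (norm_nonneg (ι v)) (norm_nonneg (S1 v)))]
  -- density of the core in the graph norm
  let L2m : V →ₗ[ℂ] H :=
    { toFun := S1
      map_add' := hS1add
      map_smul' := hS1smul }
  refine ⟨Real.sqrt D, ?_⟩
  intro u hu
  obtain ⟨w, hw1, hw2⟩ := Egorov19.sa_graph_dense hS (ι : V →ₗ[ℂ] H) L2m
    (fun v => ⟨hS1 v, rfl⟩) hS2 (fun f => ⟨ρ f, hS2 (ρ f), hρ f⟩) u hu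
  have hw1' : Filter.Tendsto (fun n => ι (w n)) Filter.atTop (nhds u) := hw1
  have hw2' : Filter.Tendsto (fun n => S1 (w n)) Filter.atTop (nhds (S ⟨u, hu⟩)) := hw2
  -- the sequence T1 (w n) is Cauchy
  have hdiff : ∀ a b : V, ‖T1 a - T1 b‖ ≤
      Real.sqrt D * (‖ι a - ι b‖ + ‖S1 a - S1 b‖) := by
    intro a b
    have h := hrng' (a - b)
    rw [hT1sub, hS1sub, map_sub] at h
    exact h
  have hc1 : CauchySeq (fun n => ι (w n)) := hw1'.cauchySeq
  have hc2 : CauchySeq (fun n => S1 (w n)) := hw2'.cauchySeq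
  have hcauchy : CauchySeq (fun n => T1 (w n)) := by
    rw [Metric.cauchySeq_iff]
    intro ε hε
    have hε2 : 0 < ε / (2 * (Real.sqrt D + 1)) := by positivity
    obtain ⟨N1, hN1⟩ := Metric.cauchySeq_iff.mp hc1 _ hε2
    obtain ⟨N2, hN2⟩ := Metric.cauchySeq_iff.mp hc2 _ hε2
    refine ⟨max N1 N2, fun m hm n hn => ?_⟩
    have h1 := hN1 m (le_trans (le_max_left _ _) hm) n (le_trans (le_max_left _ _) hn)
    have h2 := hN2 m (le_trans (le_max_right _ _) hm) n (le_trans (le_max_right _ _) hn)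
    rw [dist_eq_norm] at h1 h2 ⊢
    refine lt_of_le_of_lt (hdiff (w m) (w n)) ?_
    have hlt : ‖ι (w m) - ι (w n)‖ + ‖S1 (w m) - S1 (w n)‖ < 2 * (ε / (2 * (Real.sqrt D + 1))) := by
      linarith
    have hD2 : 0 < Real.sqrt D + 1 := by positivity
    calc Real.sqrt D * (‖ι (w m) - ι (w n)‖ + ‖S1 (w m) - S1 (w n)‖)
        ≤ (Real.sqrt D + 1) * (‖ι (w m) - ι (w n)‖ + ‖S1 (w m) - S1 (w n)‖) := by
          refine mul_le_mul_of_nonneg_right (by linarith) ?_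
          positivity
      _ < (Real.sqrt D + 1) * (2 * (ε / (2 * (Real.sqrt D + 1)))) := by
          exact mul_lt_mul_of_pos_left hlt hD2
      _ = ε := by field_simp
  obtain ⟨y, hy⟩ := cauchySeq_tendsto_of_complete hcauchy
  -- T is closed
  obtain ⟨hu', huval⟩ := Egorov19.sa_closed hT (u := fun n => ⟨ι (w n), hT1 (w n)⟩)
    (x := u) (y := y) (by exact hw1') (by exact hy)
  refine ⟨hu', ?_⟩
  rw [huval]
  -- pass to the limit in the norm bound
  have hnorm1 : Filter.Tendsto (fun n => ‖T1 (w n)‖) Filter.atTop (nhds ‖y‖) :=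
    (continuous_norm.continuousAt).tendsto.comp hy
  have hnorm2 : Filter.Tendsto
      (fun n => Real.sqrt D * (‖ι (w n)‖ + ‖S1 (w n)‖)) Filter.atTop
      (nhds (Real.sqrt D * (‖u‖ + ‖S ⟨u, hu⟩‖))) := by
    refine Filter.Tendsto.const_mul _ ?_
    exact ((continuous_norm.continuousAt).tendsto.comp hw1').add
      ((continuous_norm.continuousAt).tendsto.comp hw2')
  exact le_of_tendsto_of_tendsto' hnorm1 hnorm2 (fun n => hrng' (w n))
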